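/- Jordan block index computation: let V be a finite-dimensional ℤ₂-graded vector space with an odd nilpotent operator D (D swaps V⁺ and V⁻). Define H_top^k(V) := ker D^{2k+1}/(ker D^{2k+1} ∩ im D + ker D^{2k}) and H_top(V) = ⊕_{k≥0} H_top^k(V), with the induced ℤ₂-grading. Then dim H_top(V)⁺ − dim H_top(V)⁻ = dim V⁺ − dim V⁻. -/

import Mathlib

open Module LinearMap Submodule

/-!
Call a subspace `W` graded if it is the sum of its even and odd parts, and put
`χ(W) = dim (W ∩ V⁺) - dim (W ∩ V⁻)`. On graded subspaces `χ` satisfies inclusion–exclusion,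
and since `D` is odd, rank–nullity on `W` reads `χ(D W) + χ(W) = χ(ker D ∩ W)`. The kernels
`Kₙ = ker Dⁿ` are graded and `D Kₙ₊₁ = Kₙ ∩ im D`; together this turns the `k`-th summand into
`χ(K₂ₖ₊₂) - χ(K₂ₖ)`, so the sum telescopes to `χ(V) - χ(0)`.
-/

theorem sup_inf_eq_left_of_disjoint {α : Type*} [Lattice α] [OrderBot α] [IsModularLattice α]
    {a b c d : α} (hac : a ≤ c) (hbd : b ≤ d) (hcd : Disjoint c d) : (a ⊔ b) ⊓ c = a := by
  rw [sup_inf_assoc_of_le b hac, (hcd.symm.mono_left hbd).eq_bot, sup_bot_eq]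

theorem finsum_sub_eq_of_forall_ge {M : Type*} [AddCommGroup M] {g : ℕ → M} {N : ℕ}
    (hg : ∀ n ≥ N, g n = g N) : ∑ᶠ k, (g (k + 1) - g k) = g N - g 0 := by
  rw [finsum_eq_sum_of_support_subset (s := Finset.range N) _ ?_, Finset.sum_range_sub]
  intro k hk
  by_contra hkN
  simp only [Finset.coe_range, Set.mem_Iio, not_lt] at hkN
  exact hk (show g (k + 1) - g k = 0 by rw [hg _ (by omega), hg k hkN, sub_self])

namespace Submodule

section Graded

variable {R M M₂ : Type*} [Ring R] [AddCommGroup M] [Module R M] [AddCommGroup M₂] [Module R M₂]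
  {Vp Vm W W₁ W₂ : Submodule R M} {A B : Submodule R M₂} {f : M →ₗ[R] M₂}
  {D : Module.End R M}

def IsGraded (Vp Vm W : Submodule R M) : Prop :=
  W ≤ W ⊓ Vp ⊔ W ⊓ Vm

theorem IsGraded.symm (h : IsGraded Vp Vm W) : IsGraded Vm Vp W := by
  rwa [IsGraded, sup_comm]

theorem IsGraded.sup_inf_eq (hd : Disjoint Vp Vm) (h₁ : IsGraded Vp Vm W₁)
    (h₂ : IsGraded Vp Vm W₂) : (W₁ ⊔ W₂) ⊓ Vp = W₁ ⊓ Vp ⊔ W₂ ⊓ Vp := by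
  refine le_antisymm ?_ (sup_le (inf_le_inf_right _ le_sup_left) (inf_le_inf_right _ le_sup_right))
  calc (W₁ ⊔ W₂) ⊓ Vp ≤ ((W₁ ⊓ Vp ⊔ W₂ ⊓ Vp) ⊔ (W₁ ⊓ Vm ⊔ W₂ ⊓ Vm)) ⊓ Vp := by
        exact inf_le_inf_right _ (sup_le (h₁.trans (sup_le_sup le_sup_left le_sup_left))
          (h₂.trans (sup_le_sup le_sup_right le_sup_right)))
    _ = W₁ ⊓ Vp ⊔ W₂ ⊓ Vp :=
        sup_inf_eq_left_of_disjoint (sup_le inf_le_right inf_le_right)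
          (sup_le inf_le_right inf_le_right) hd

theorem IsGraded.map (hA : Vp.map f ≤ A) (hB : Vm.map f ≤ B) (h : IsGraded Vp Vm W) :
    IsGraded A B (W.map f) :=
  calc W.map f ≤ (W ⊓ Vp).map f ⊔ (W ⊓ Vm).map f := by rw [← Submodule.map_sup]; exact map_mono h
    _ ≤ W.map f ⊓ A ⊔ W.map f ⊓ B :=
        sup_le_sup (le_inf (map_mono inf_le_left) ((map_mono inf_le_right).trans hA))
          (le_inf (map_mono inf_le_left) ((map_mono inf_le_right).trans hB))

theorem IsGraded.map_inf_eq (hd : Disjoint A B) (hA : Vp.map f ≤ A) (hB : Vm.map f ≤ B)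
    (h : IsGraded Vp Vm W) : W.map f ⊓ A = (W ⊓ Vp).map f := by
  refine le_antisymm ?_ (le_inf (map_mono inf_le_left) ((map_mono inf_le_right).trans hA))
  calc W.map f ⊓ A ≤ ((W ⊓ Vp).map f ⊔ (W ⊓ Vm).map f) ⊓ A := by
        rw [← Submodule.map_sup]; exact inf_le_inf_right _ (map_mono h)
    _ = (W ⊓ Vp).map f :=
        sup_inf_eq_left_of_disjoint ((map_mono inf_le_right).trans hA)
          ((map_mono inf_le_right).trans hB) hd

theorem isGraded_ker (hc : Codisjoint Vp Vm) (hd : Disjoint A B) (hA : Vp.map f ≤ A)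
    (hB : Vm.map f ≤ B) : IsGraded Vp Vm (ker f) := by
  intro x hx
  obtain ⟨p, hp, m, hm, rfl⟩ := mem_sup.1 (hc.eq_top ▸ mem_top : x ∈ Vp ⊔ Vm)
  have hfpA : f p ∈ A := hA (mem_map_of_mem hp)
  have hfmB : f m ∈ B := hB (mem_map_of_mem hm)
  have hsum : f p + f m = 0 := by rwa [mem_ker, map_add] at hx
  have hfp : f p = 0 := by
    refine disjoint_def.1 hd _ hfpA ?_
    rw [eq_neg_of_add_eq_zero_left hsum]
    exact B.neg_mem hfmB
  have hfm : f m = 0 := by rwa [hfp, zero_add] at hsum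
  exact add_mem_sup ⟨hfp, hp⟩ ⟨hfm, hm⟩

theorem map_pow_two_mul_le (hp : Vp.map D ≤ Vm) (hm : Vm.map D ≤ Vp) (k : ℕ) :
    Vp.map (D ^ (2 * k)) ≤ Vp := by
  induction k with
  | zero => rw [mul_zero, pow_zero, Module.End.one_eq_id, map_id]
  | succ k ih =>
    rw [mul_add, mul_one, pow_add, sq, Module.End.mul_eq_comp, Module.End.mul_eq_comp,
      map_comp, map_comp]
    exact (map_mono (map_mono hp |>.trans hm)).trans ih

theorem isGraded_ker_pow (hc : IsCompl Vp Vm) (hp : Vp.map D ≤ Vm) (hm : Vm.map D ≤ Vp)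
    (n : ℕ) : IsGraded Vp Vm (ker (D ^ n)) := by
  obtain ⟨k, rfl | rfl⟩ := Nat.even_or_odd' n
  · exact isGraded_ker hc.codisjoint hc.disjoint (map_pow_two_mul_le hp hm k)
      (map_pow_two_mul_le hm hp k)
  · rw [pow_succ', Module.End.mul_eq_comp]
    exact isGraded_ker hc.codisjoint hc.disjoint.symm
      (by rw [map_comp]; exact (map_mono (map_pow_two_mul_le hp hm k)).trans hp)
      (by rw [map_comp]; exact (map_mono (map_pow_two_mul_le hm hp k)).trans hm)

theorem map_ker_pow_succ (D : Module.End R M) (n : ℕ) :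
    (ker (D ^ (n + 1))).map D = ker (D ^ n) ⊓ range D := by
  rw [pow_succ, Module.End.mul_eq_comp, ker_comp, map_comap_eq, inf_comm]

end Graded

section Superdim

variable {K V : Type*} [Field K] [AddCommGroup V] [Module K V] {Vp Vm W W₁ W₂ : Submodule K V}
  {D : Module.End K V}

noncomputable def superdim (Vp Vm W : Submodule K V) : ℤ :=
  finrank K ↥(W ⊓ Vp) - finrank K ↥(W ⊓ Vm)

@[simp]
theorem superdim_top : superdim Vp Vm ⊤ = finrank K Vp - finrank K Vm := by
  rw [superdim, top_inf_eq, top_inf_eq]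

@[simp]
theorem superdim_bot : superdim Vp Vm ⊥ = 0 := by
  rw [superdim, bot_inf_eq, bot_inf_eq, finrank_bot, sub_self]

variable [FiniteDimensional K V]

theorem finrank_map_add_finrank_ker_inf {V₂ : Type*} [AddCommGroup V₂] [Module K V₂]
    (f : V →ₗ[K] V₂) (S : Submodule K V) :
    finrank K (S.map f) + finrank K ↥(ker f ⊓ S) = finrank K S := by
  rw [← range_domRestrict, ← finrank_range_add_finrank_ker (f.domRestrict S), inf_comm,
    ← map_comap_subtype, ← ker_comp, finrank_map_subtype_eq]
  rfl

theorem IsGraded.superdim_sup_add_superdim_inf (hd : Disjoint Vp Vm) (h₁ : IsGraded Vp Vm W₁)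
    (h₂ : IsGraded Vp Vm W₂) :
    superdim Vp Vm (W₁ ⊔ W₂) + superdim Vp Vm (W₁ ⊓ W₂) =
      superdim Vp Vm W₁ + superdim Vp Vm W₂ := by
  have hp := finrank_sup_add_finrank_inf_eq (W₁ ⊓ Vp) (W₂ ⊓ Vp)
  have hm := finrank_sup_add_finrank_inf_eq (W₁ ⊓ Vm) (W₂ ⊓ Vm)
  rw [← inf_inf_distrib_right] at hp hm
  rw [superdim, superdim, superdim, superdim, h₁.sup_inf_eq hd h₂,
    h₁.symm.sup_inf_eq hd.symm h₂.symm]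
  omega

theorem IsGraded.superdim_map_add_superdim (hd : Disjoint Vp Vm) (hp : Vp.map D ≤ Vm)
    (hm : Vm.map D ≤ Vp) (h : IsGraded Vp Vm W) :
    superdim Vp Vm (W.map D) + superdim Vp Vm W = superdim Vp Vm (ker D ⊓ W) := by
  have hVp := finrank_map_add_finrank_ker_inf D (W ⊓ Vp)
  have hVm := finrank_map_add_finrank_ker_inf D (W ⊓ Vm)
  rw [← inf_assoc] at hVp hVm
  rw [superdim, superdim, superdim, h.symm.map_inf_eq hd hm hp, h.map_inf_eq hd.symm hp hm]
  omega

theorem superdim_ker_pow_inf_range_add (hc : IsCompl Vp Vm) (hp : Vp.map D ≤ Vm)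
    (hm : Vm.map D ≤ Vp) (n : ℕ) :
    superdim Vp Vm (ker (D ^ n) ⊓ range D) + superdim Vp Vm (ker (D ^ (n + 1))) =
      superdim Vp Vm (ker D) := by
  have hker : ker D ≤ ker (D ^ (n + 1)) := by
    rw [pow_succ, Module.End.mul_eq_comp]; exact ker_le_ker_comp D _
  rw [← map_ker_pow_succ,
    (isGraded_ker_pow hc hp hm _).superdim_map_add_superdim hc.disjoint hp hm, inf_eq_left.2 hker]

theorem superdim_ker_pow_succ_sub_superdim_sup (hc : IsCompl Vp Vm) (hp : Vp.map D ≤ Vm)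
    (hm : Vm.map D ≤ Vp) (n : ℕ) :
    superdim Vp Vm (ker (D ^ (n + 1)))
        - superdim Vp Vm (ker (D ^ (n + 1)) ⊓ range D ⊔ ker (D ^ n)) =
      superdim Vp Vm (ker (D ^ (n + 2))) - superdim Vp Vm (ker (D ^ n)) := by
  have hmono : ker (D ^ n) ≤ ker (D ^ (n + 1)) := by
    rw [pow_succ', Module.End.mul_eq_comp]; exact ker_le_ker_comp _ D
  have hgr : IsGraded Vp Vm (ker (D ^ (n + 1)) ⊓ range D) :=
    map_ker_pow_succ D (n + 1) ▸ ((isGraded_ker_pow hc hp hm (n + 2)).map hp hm).symm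
  have hsup := hgr.superdim_sup_add_superdim_inf hc.disjoint (isGraded_ker_pow hc hp hm n)
  rw [inf_right_comm, inf_eq_right.2 hmono] at hsup
  have h₁ := superdim_ker_pow_inf_range_add hc hp hm (n + 1)
  have h₀ := superdim_ker_pow_inf_range_add hc hp hm n
  linarith

end Superdim

end Submodule

/-- Jordan block index computation: let `V = V⁺ ⊕ V⁻` be a
finite-dimensional ℤ₂-graded vector space and `D` an odd nilpotent operator.  With
`H_top^k(V) = ker D^{2k+1}/(ker D^{2k+1} ∩ im D + ker D^{2k})` and the induced grading,
the Euler characteristic of the higher Dirac cohomology equals that of `V`: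
`dim H_top(V)⁺ − dim H_top(V)⁻ = dim V⁺ − dim V⁻`.  (Dimensions of the graded pieces of
the subquotients are expressed as differences of dimensions of graded submodules.) -/
theorem stmt19 {K V : Type*} [Field K] [AddCommGroup V] [Module K V]
    [FiniteDimensional K V]
    (Vp Vm : Submodule K V) (hcompl : IsCompl Vp Vm)
    (D : Module.End K V) (hnil : IsNilpotent D)
    (hoddp : Vp.map D ≤ Vm) (hoddm : Vm.map D ≤ Vp) :
    ∑ᶠ k : ℕ,
      (((Module.finrank K (LinearMap.ker (D ^ (2 * k + 1)) ⊓ Vp :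
            Submodule K V) : ℤ)
        - Module.finrank K (((LinearMap.ker (D ^ (2 * k + 1)) ⊓ LinearMap.range D
            ⊔ LinearMap.ker (D ^ (2 * k))) ⊓ Vp : Submodule K V)))
       - ((Module.finrank K (LinearMap.ker (D ^ (2 * k + 1)) ⊓ Vm :
            Submodule K V) : ℤ)
        - Module.finrank K (((LinearMap.ker (D ^ (2 * k + 1)) ⊓ LinearMap.range D
            ⊔ LinearMap.ker (D ^ (2 * k))) ⊓ Vm : Submodule K V))))
      = (Module.finrank K Vp : ℤ) - Module.finrank K Vm := by
  obtain ⟨N, hN⟩ := hnil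
  have hker : ∀ n ≥ N, ker (D ^ n) = ⊤ := fun n hn => by rw [pow_eq_zero_of_le hn hN, ker_zero]
  calc _ = ∑ᶠ k : ℕ, (superdim Vp Vm (ker (D ^ (2 * (k + 1)))) -
        superdim Vp Vm (ker (D ^ (2 * k)))) := by
        refine finsum_congr fun k => ?_
        rw [mul_add, mul_one, ← superdim_ker_pow_succ_sub_superdim_sup hcompl hoddp hoddm]
        simp only [superdim]
        ring
    _ = superdim Vp Vm (ker (D ^ (2 * N))) - superdim Vp Vm (ker (D ^ (2 * 0))) :=
        finsum_sub_eq_of_forall_ge (g := fun k => superdim Vp Vm (ker (D ^ (2 * k))))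
          fun n hn => by simp only [hker _ (by omega : 2 * n ≥ N), hker _ (by omega : 2 * N ≥ N)]
    _ = _ := by
        rw [hker _ (by omega), mul_zero, pow_zero, Module.End.one_eq_id, ker_id, superdim_top,
          superdim_bot, sub_zero]
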